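/- Let P1 and P2 be disjoint copies of the Petersen graph. In P1 let u and v be adjacent vertices, with a1, a2 the neighbours of u other than v and b1, b2 the neighbours of v other than u. In P2 let e = x1y1 and f = x2y2 be two independent edges. Form the graph Z1 as follows: take the disjoint union of P1 − {u,v} and P2 with the edges e and f deleted; add the edges b1x1 and b2y1; and add four new pendant vertices a1*, a2*, x2*, y2* with edges a1a1*, a2a2*, x2x2*, y2y2*. Then Z1 admits no proper 3-edge-colouring. (That is, the junction Z1 = I∘H of the isochromatic 4-pole I with the heterochromatic 4-pole H is uncolourable, so ρ(Z1) ≥ 1.) -/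

import Mathlib

/-- A proper 3-edge-colouring of a simple graph: a colour for every unordered pair,
such that distinct edges of the graph sharing a vertex receive distinct colours. -/
def IsProper3EdgeColoring {V : Type*} (G : SimpleGraph V) (c : Sym2 V → Fin 3) : Prop :=
  ∀ e₁ e₂ : Sym2 V, e₁ ∈ G.edgeSet → e₂ ∈ G.edgeSet → e₁ ≠ e₂ →
    (∃ v, v ∈ e₁ ∧ v ∈ e₂) → c e₁ ≠ c e₂

/-- A graph admits a proper 3-edge-colouring. -/
def ThreeEdgeColorable {V : Type*} (G : SimpleGraph V) : Prop :=
  ∃ c : Sym2 V → Fin 3, IsProper3EdgeColoring G c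

/-- The vertices of the Petersen graph: the 2-element subsets of a 5-element set. -/
abbrev PetersenVert : Type := {s : Finset (Fin 5) // s.card = 2}

/-- The Petersen graph, as the Kneser graph of 2-element subsets of a 5-element set:
two subsets are adjacent when they are disjoint. -/
def petersen : SimpleGraph PetersenVert where
  Adj a b := Disjoint (a : Finset (Fin 5)) (b : Finset (Fin 5))
  symm := ⟨fun _ _ h => h.symm⟩
  loopless := by
    refine ⟨?_⟩
    intro a h
    have := disjoint_self.mp h
    have h2 := a.2
    rw [this] at h2
    simp at h2

/-- The (2,2)-pole `Z1 = I ∘ H`: take a copy of the Petersen graph with the adjacent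
vertices `u, v` removed, and a second copy with the independent edges `x1y1`, `x2y2`
deleted; add edges `b1x1` and `b2y1`, and pendant vertices (indexed by `Fin 4`)
at `a1, a2, x2, y2`. -/
def poleZ1 (u v a1 a2 b1 b2 x1 y1 x2 y2 : PetersenVert) :
    SimpleGraph (({x : PetersenVert // x ≠ u ∧ x ≠ v} ⊕ PetersenVert) ⊕ Fin 4) :=
  SimpleGraph.fromRel (fun p q =>
    match p, q with
    | Sum.inl (Sum.inl x), Sum.inl (Sum.inl y) => petersen.Adj x.1 y.1
    | Sum.inl (Sum.inr x), Sum.inl (Sum.inr y) =>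
        petersen.Adj x y ∧ s(x, y) ≠ s(x1, y1) ∧ s(x, y) ≠ s(x2, y2)
    | Sum.inl (Sum.inl x), Sum.inl (Sum.inr y) =>
        (x.1 = b1 ∧ y = x1) ∨ (x.1 = b2 ∧ y = y1)
    | Sum.inl (Sum.inl x), Sum.inr k => (k = 0 ∧ x.1 = a1) ∨ (k = 1 ∧ x.1 = a2)
    | Sum.inl (Sum.inr y), Sum.inr k => (k = 2 ∧ y = x2) ∨ (k = 3 ∧ y = y2)
    | _, _ => False)

/-!
A 3-edge-colouring of `Z1` restricts to colourings of its two halves. In `P - u - v` the colours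
missing at `b1` and `b2` always agree, so the two connecting edges `b1x1`, `b2y1` get the same
colour. That colour is then missing at both ends of `e = x1y1` in `P - e - f`, so `e` can be put
back, giving a 3-edge-colouring of `P - f`, and the Petersen graph minus an edge has none. The two
facts about the Petersen graph are checked by the kernel on an exhaustive backtracking
enumeration of the proper colourings of an edge list.
-/

open SimpleGraph

section EdgeColoring

variable {V W : Type*} {G H : SimpleGraph V} {c : Sym2 V → Fin 3}

def ColorMissingAt (G : SimpleGraph V) (c : Sym2 V → Fin 3) (x : V) (a : Fin 3) : Prop :=
  ∀ e ∈ G.edgeSet, x ∈ e → c e ≠ a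

theorem IsProper3EdgeColoring.mono (hGH : G ≤ H) (hc : IsProper3EdgeColoring H c) :
    IsProper3EdgeColoring G c := fun e₁ e₂ h₁ h₂ =>
  hc e₁ e₂ (edgeSet_mono hGH h₁) (edgeSet_mono hGH h₂)

theorem IsProper3EdgeColoring.comap {H : SimpleGraph W} {c : Sym2 W → Fin 3} (f : G →g H)
    (hf : Function.Injective f) (hc : IsProper3EdgeColoring H c) :
    IsProper3EdgeColoring G (c ∘ Sym2.map f) := by
  rintro e₁ e₂ h₁ h₂ hne ⟨x, hx₁, hx₂⟩
  exact hc _ _ (f.map_mem_edgeSet h₁) (f.map_mem_edgeSet h₂)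
    ((Sym2.map.injective hf).ne hne)
    ⟨f x, Sym2.mem_map.mpr ⟨x, hx₁, rfl⟩, Sym2.mem_map.mpr ⟨x, hx₂, rfl⟩⟩

theorem IsProper3EdgeColoring.colorMissingAt_comap {H : SimpleGraph W} {c : Sym2 W → Fin 3}
    (f : G →g H) (hc : IsProper3EdgeColoring H c) {x : V} {e : Sym2 W} (he : e ∈ H.edgeSet)
    (hxe : f x ∈ e) (hfe : ∀ e' ∈ G.edgeSet, e'.map f ≠ e) :
    ColorMissingAt G (c ∘ Sym2.map f) x (c e) := fun e' he' hxe' =>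
  hc _ _ (f.map_mem_edgeSet he') he (hfe e' he') ⟨f x, Sym2.mem_map.mpr ⟨x, hxe', rfl⟩, hxe⟩

theorem deleteEdges_le_deleteEdges_insert_sup_edge (s : Set (Sym2 V)) (x y : V) :
    G.deleteEdges s ≤ G.deleteEdges (insert s(x, y) s) ⊔ edge x y := by
  intro p q h
  obtain ⟨hpq, hs⟩ := deleteEdges_adj.mp h
  by_cases he : s(p, q) = s(x, y)
  · exact Or.inr ((edge_adj _ _ _ _).mpr ⟨Sym2.eq_iff.mp he, hpq.ne⟩)
  · exact Or.inl (deleteEdges_adj.mpr ⟨hpq, by simp [he, hs]⟩)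

theorem IsProper3EdgeColoring.update_edge [DecidableEq V] {x y : V} {a : Fin 3}
    (hc : IsProper3EdgeColoring G c) (hx : ColorMissingAt G c x a) (hy : ColorMissingAt G c y a) :
    IsProper3EdgeColoring (G ⊔ edge x y) (Function.update c s(x, y) a) := by
  have mem_G : ∀ e ∈ (G ⊔ edge x y).edgeSet, e ≠ s(x, y) → e ∈ G.edgeSet := fun e he hne =>
    ((edgeSet_sup _ _ ▸ he) : _).resolve_right fun h => hne (edgeSet_edge_subset h)
  have key : ∀ e ∈ (G ⊔ edge x y).edgeSet, e ≠ s(x, y) → (∃ w, w ∈ s(x, y) ∧ w ∈ e) →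
      c e ≠ a := by
    rintro e he hne ⟨w, hw, hwe⟩
    rcases Sym2.mem_iff.mp hw with rfl | rfl
    exacts [hx e (mem_G e he hne) hwe, hy e (mem_G e he hne) hwe]
  intro e₁ e₂ h₁ h₂ hne hshare
  by_cases he₁ : e₁ = s(x, y) <;> by_cases he₂ : e₂ = s(x, y)
  · exact absurd (he₁.trans he₂.symm) hne
  · subst he₁
    rw [Function.update_self, Function.update_of_ne he₂]
    exact (key e₂ h₂ he₂ hshare).symm
  · subst he₂
    rw [Function.update_self, Function.update_of_ne he₁]
    exact key e₁ h₁ he₁ (hshare.imp fun _ => And.symm)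
  · rw [Function.update_of_ne he₁, Function.update_of_ne he₂]
    exact hc e₁ e₂ (mem_G e₁ h₁ he₁) (mem_G e₂ h₂ he₂) hne hshare

end EdgeColoring

section Search

variable {V : Type*} [DecidableEq V]

def Meets (p q : V × V) : Prop := p.1 = q.1 ∨ p.1 = q.2 ∨ p.2 = q.1 ∨ p.2 = q.2

instance (p q : V × V) : Decidable (Meets p q) := by unfold Meets; infer_instance

def properColorings : List (V × V) → List (List ((V × V) × Fin 3))
  | [] => [[]]
  | p :: L => (properColorings L).flatMap fun τ =>
      ((List.finRange 3).filter fun a => τ.all fun q => !decide (Meets p q.1) || a != q.2).map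
        (fun a => (p, a) :: τ)

theorem map_mem_properColorings {c : V × V → Fin 3} :
    ∀ {L : List (V × V)}, L.Pairwise (fun p q => Meets p q → c p ≠ c q) →
      L.map (fun p => (p, c p)) ∈ properColorings L
  | [], _ => List.mem_singleton_self _
  | p :: L, h => by
    rw [List.pairwise_cons] at h
    simp only [properColorings, List.map_cons, List.mem_flatMap, List.mem_map, List.mem_filter,
      List.all_eq_true]
    refine ⟨_, map_mem_properColorings h.2, c p, ⟨List.mem_finRange _, ?_⟩, rfl⟩
    simp only [List.mem_map, forall_exists_index, and_imp, forall_apply_eq_imp_iff₂]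
    intro q hq
    by_cases hpq : Meets p q <;> simp [hpq, h.1 q hq]

def missesColor (τ : List ((V × V) × Fin 3)) (x : V) (a : Fin 3) : Bool :=
  τ.all fun q => !decide (q.1.1 = x ∨ q.1.2 = x) || q.2 != a

theorem missesColor_map {L : List (V × V)} {c : V × V → Fin 3} {x : V} {a : Fin 3}
    (h : ∀ p ∈ L, p.1 = x ∨ p.2 = x → c p ≠ a) : missesColor (L.map fun p => (p, c p)) x a := by
  simp only [missesColor, List.all_eq_true, List.mem_map, forall_exists_index, and_imp,
    forall_apply_eq_imp_iff₂]
  intro p hp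
  by_cases hpx : p.1 = x ∨ p.2 = x <;> simp [hpx, h p hp]

end Search

section EdgeList

variable {V : Type*} (G : SimpleGraph V) [DecidableRel G.Adj]

def edgeList : List V → List (V × V)
  | [] => []
  | x :: xs => (xs.filter (G.Adj x ·)).map (x, ·) ++ edgeList xs

variable {G}

theorem of_mem_edgeList {p : V × V} :
    ∀ {xs : List V}, p ∈ edgeList G xs → G.Adj p.1 p.2 ∧ p.1 ∈ xs ∧ p.2 ∈ xs
  | [], h => by simp [edgeList] at h
  | x :: xs, h => by
    rcases List.mem_append.mp h with h | h
    · obtain ⟨y, hy, rfl⟩ := List.mem_map.mp h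
      obtain ⟨hy, hxy⟩ := List.mem_filter.mp hy
      exact ⟨of_decide_eq_true hxy, List.mem_cons_self, List.mem_cons_of_mem _ hy⟩
    · obtain ⟨hadj, h₁, h₂⟩ := of_mem_edgeList h
      exact ⟨hadj, List.mem_cons_of_mem _ h₁, List.mem_cons_of_mem _ h₂⟩

theorem edgeList_pairwise_ne :
    ∀ {xs : List V}, xs.Nodup → (edgeList G xs).Pairwise fun p q => s(p.1, p.2) ≠ s(q.1, q.2)
  | [], _ => List.Pairwise.nil
  | x :: xs, hxs => by
    rw [List.nodup_cons] at hxs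
    refine List.pairwise_append.mpr ⟨?_, edgeList_pairwise_ne hxs.2, ?_⟩
    · exact List.pairwise_map.mpr ((hxs.2.filter _).imp fun hne h => hne (Sym2.congr_right.mp h))
    · rintro _ hp q hq h
      obtain ⟨y, -, rfl⟩ := List.mem_map.mp hp
      obtain ⟨-, hq₁, hq₂⟩ := of_mem_edgeList hq
      have hx : x ∈ s(q.1, q.2) := h ▸ Sym2.mem_mk_left x y
      rcases Sym2.mem_iff.mp hx with rfl | rfl
      exacts [hxs.1 hq₁, hxs.1 hq₂]

end EdgeList

section Bridge

variable {V : Type*} [DecidableEq V] {G : SimpleGraph V} [DecidableRel G.Adj] {xs : List V}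
  {c : Sym2 V → Fin 3}

theorem IsProper3EdgeColoring.mem_properColorings (hxs : xs.Nodup)
    (hc : IsProper3EdgeColoring G c) :
    (edgeList G xs).map (fun p => (p, c s(p.1, p.2))) ∈ properColorings (edgeList G xs) := by
  refine map_mem_properColorings ((edgeList_pairwise_ne hxs).imp_of_mem ?_)
  intro p q hp hq hne hpq
  refine hc _ _ (of_mem_edgeList hp).1 (of_mem_edgeList hq).1 hne ?_
  rcases hpq with h | h | h | h
  · exact ⟨p.1, Sym2.mem_mk_left _ _, h ▸ Sym2.mem_mk_left _ _⟩
  · exact ⟨p.1, Sym2.mem_mk_left _ _, h ▸ Sym2.mem_mk_right _ _⟩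
  · exact ⟨p.2, Sym2.mem_mk_right _ _, h ▸ Sym2.mem_mk_left _ _⟩
  · exact ⟨p.2, Sym2.mem_mk_right _ _, h ▸ Sym2.mem_mk_right _ _⟩

theorem ThreeEdgeColorable.properColorings_ne_nil (hxs : xs.Nodup) (hG : ThreeEdgeColorable G) :
    properColorings (edgeList G xs) ≠ [] :=
  let ⟨_, hc⟩ := hG
  List.ne_nil_of_mem (hc.mem_properColorings hxs)

theorem ColorMissingAt.missesColor {x : V} {a : Fin 3} (h : ColorMissingAt G c x a) :
    missesColor ((edgeList G xs).map fun p => (p, c s(p.1, p.2))) x a :=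
  missesColor_map fun p hp hpx =>
    h _ (of_mem_edgeList hp).1 (by rcases hpx with rfl | rfl <;> simp)

end Bridge

section Petersen

instance : DecidableRel petersen.Adj := fun a b =>
  inferInstanceAs (Decidable (Disjoint (a : Finset (Fin 5)) (b : Finset (Fin 5))))

def petersenVerts : List PetersenVert :=
  [⟨{0, 1}, rfl⟩, ⟨{0, 2}, rfl⟩, ⟨{0, 3}, rfl⟩, ⟨{0, 4}, rfl⟩, ⟨{1, 2}, rfl⟩,
   ⟨{1, 3}, rfl⟩, ⟨{1, 4}, rfl⟩, ⟨{2, 3}, rfl⟩, ⟨{2, 4}, rfl⟩, ⟨{3, 4}, rfl⟩]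

theorem nodup_petersenVerts : petersenVerts.Nodup := by decide

set_option maxRecDepth 4000 in
theorem properColorings_petersen_deleteEdges : ∀ x y : PetersenVert, petersen.Adj x y →
    properColorings (edgeList (petersen.deleteEdges {s(x, y)}) petersenVerts) = [] := by
  decide +kernel

set_option maxRecDepth 4000 in
theorem missesColor_petersen_deleteIncidenceSet : ∀ u v b₁ b₂ : PetersenVert, petersen.Adj u v →
    petersen.Adj v b₁ → petersen.Adj v b₂ → b₁ ≠ u → b₂ ≠ u →
    ∀ τ ∈ properColorings
      (edgeList ((petersen.deleteIncidenceSet u).deleteIncidenceSet v) petersenVerts),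
    ∀ a₁ a₂ : Fin 3, missesColor τ b₁ a₁ → missesColor τ b₂ a₂ → a₁ = a₂ := by
  decide +kernel

theorem not_threeEdgeColorable_petersen_deleteEdges {x y : PetersenVert} (h : petersen.Adj x y) :
    ¬ ThreeEdgeColorable (petersen.deleteEdges {s(x, y)}) := fun hG =>
  hG.properColorings_ne_nil nodup_petersenVerts (properColorings_petersen_deleteEdges x y h)

theorem petersen_deleteIncidenceSet_missing_color_eq {u v b₁ b₂ : PetersenVert}
    {c : Sym2 PetersenVert → Fin 3} {a₁ a₂ : Fin 3} (huv : petersen.Adj u v)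
    (hb₁ : petersen.Adj v b₁) (hb₂ : petersen.Adj v b₂) (hb₁u : b₁ ≠ u) (hb₂u : b₂ ≠ u)
    (hc : IsProper3EdgeColoring ((petersen.deleteIncidenceSet u).deleteIncidenceSet v) c)
    (h₁ : ColorMissingAt ((petersen.deleteIncidenceSet u).deleteIncidenceSet v) c b₁ a₁)
    (h₂ : ColorMissingAt ((petersen.deleteIncidenceSet u).deleteIncidenceSet v) c b₂ a₂) :
    a₁ = a₂ :=
  missesColor_petersen_deleteIncidenceSet u v b₁ b₂ huv hb₁ hb₂ hb₁u hb₂u _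
    (hc.mem_properColorings nodup_petersenVerts) a₁ a₂ h₁.missesColor h₂.missesColor

end Petersen

section PoleZ1

variable {u v a1 a2 b1 b2 x1 y1 x2 y2 : PetersenVert}
  {c : Sym2 ((({x : PetersenVert // x ≠ u ∧ x ≠ v} ⊕ PetersenVert) ⊕ Fin 4)) → Fin 3}

local notation "Z" => poleZ1 u v a1 a2 b1 b2 x1 y1 x2 y2

def poleZ1.homH : petersen.deleteEdges {s(x1, y1), s(x2, y2)} →g Z where
  toFun p := .inl (.inr p)
  map_rel' {p q} h := by
    obtain ⟨hpq, hne⟩ := deleteEdges_adj.mp h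
    simp only [Set.mem_insert_iff, Set.mem_singleton_iff, not_or] at hne
    rw [poleZ1, fromRel_adj]
    exact ⟨by simpa using hpq.ne, Or.inl ⟨hpq, hne⟩⟩

theorem poleZ1.homH_injective :
    Function.Injective (poleZ1.homH : _ →g Z) :=
  fun _ _ h => by simpa [poleZ1.homH] using h

/-- `u` and `v` are isolated in `P - u - v`, so they may go anywhere; sending them to the
second copy of the Petersen graph keeps the map injective. -/
def poleZ1.homI : (petersen.deleteIncidenceSet u).deleteIncidenceSet v →g Z where
  toFun x := if h : x ≠ u ∧ x ≠ v then .inl (.inl ⟨x, h⟩) else .inl (.inr x)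
  map_rel' {p q} h := by
    simp only [deleteIncidenceSet_adj] at h
    obtain ⟨⟨hpq, hpu, hqu⟩, hpv, hqv⟩ := h
    rw [dif_pos ⟨hpu, hpv⟩, dif_pos ⟨hqu, hqv⟩, poleZ1, fromRel_adj]
    exact ⟨by simpa using hpq.ne, Or.inl hpq⟩

theorem poleZ1.homI_apply_of_ne {x : PetersenVert} (h : x ≠ u ∧ x ≠ v) :
    (poleZ1.homI : _ →g Z) x = .inl (.inl ⟨x, h⟩) := dif_pos h

theorem poleZ1.homI_injective :
    Function.Injective (poleZ1.homI : _ →g Z) := by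
  intro x y h
  simp only [poleZ1.homI, RelHom.coeFn_mk] at h
  split_ifs at h <;> simp_all

theorem poleZ1.map_homH_ne (e : Sym2 PetersenVert) (b : {x : PetersenVert // x ≠ u ∧ x ≠ v})
    (z : PetersenVert) : e.map (poleZ1.homH : _ →g Z) ≠ s(.inl (.inl b), .inl (.inr z)) := by
  intro h
  obtain ⟨a, -, ha⟩ := Sym2.mem_map.mp (h ▸ Sym2.mem_mk_left _ _)
  simp [poleZ1.homH] at ha

theorem poleZ1.map_homI_ne {e : Sym2 PetersenVert}
    (he : e ∈ ((petersen.deleteIncidenceSet u).deleteIncidenceSet v).edgeSet)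
    (b : {x : PetersenVert // x ≠ u ∧ x ≠ v}) (z : PetersenVert) :
    e.map (poleZ1.homI : _ →g Z) ≠ s(.inl (.inl b), .inl (.inr z)) := by
  intro h
  obtain ⟨a, ha, haz⟩ := Sym2.mem_map.mp (h ▸ Sym2.mem_mk_right _ _)
  obtain ⟨a', rfl⟩ := Sym2.mem_iff_exists.mp ha
  simp only [mem_edgeSet, deleteIncidenceSet_adj] at he
  rw [poleZ1.homI_apply_of_ne ⟨he.1.2.1, he.2.1⟩] at haz
  exact Sum.inl_ne_inr (Sum.inl.inj haz)

theorem poleZ1_mem_edgeSet_b1_x1 (h : b1 ≠ u ∧ b1 ≠ v) :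
    s(.inl (.inl ⟨b1, h⟩), .inl (.inr x1)) ∈ (Z).edgeSet := by
  rw [mem_edgeSet, poleZ1, fromRel_adj]
  exact ⟨by simp, Or.inl (Or.inl ⟨rfl, rfl⟩)⟩

theorem poleZ1_mem_edgeSet_b2_y1 (h : b2 ≠ u ∧ b2 ≠ v) :
    s(.inl (.inl ⟨b2, h⟩), .inl (.inr y1)) ∈ (Z).edgeSet := by
  rw [mem_edgeSet, poleZ1, fromRel_adj]
  exact ⟨by simp, Or.inl (Or.inr ⟨rfl, rfl⟩)⟩

theorem IsProper3EdgeColoring.poleZ1_connectors_ne (hf : petersen.Adj x2 y2)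
    (hc : IsProper3EdgeColoring Z c) (hb1 : b1 ≠ u ∧ b1 ≠ v) (hb2 : b2 ≠ u ∧ b2 ≠ v) :
    c s(.inl (.inl ⟨b1, hb1⟩), .inl (.inr x1)) ≠ c s(.inl (.inl ⟨b2, hb2⟩), .inl (.inr y1)) := by
  intro hα
  have hx1 := hc.colorMissingAt_comap poleZ1.homH (poleZ1_mem_edgeSet_b1_x1 hb1)
    (Sym2.mem_mk_right _ _) fun e _ => poleZ1.map_homH_ne e _ _
  have hy1 := hc.colorMissingAt_comap poleZ1.homH (poleZ1_mem_edgeSet_b2_y1 hb2)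
    (Sym2.mem_mk_right _ _) fun e _ => poleZ1.map_homH_ne e _ _
  rw [hα] at hx1
  exact not_threeEdgeColorable_petersen_deleteEdges hf
    ⟨_, ((hc.comap _ poleZ1.homH_injective).update_edge hx1 hy1).mono
      (deleteEdges_le_deleteEdges_insert_sup_edge _ x1 y1)⟩

theorem IsProper3EdgeColoring.poleZ1_connectors_eq (huv : petersen.Adj u v)
    (hb1 : petersen.Adj v b1) (hb2 : petersen.Adj v b2) (hb1u : b1 ≠ u) (hb2u : b2 ≠ u)
    (hc : IsProper3EdgeColoring Z c) :
    c s(.inl (.inl ⟨b1, hb1u, hb1.ne'⟩), .inl (.inr x1)) =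
      c s(.inl (.inl ⟨b2, hb2u, hb2.ne'⟩), .inl (.inr y1)) := by
  have hb1' : b1 ≠ u ∧ b1 ≠ v := ⟨hb1u, hb1.ne'⟩
  have hb2' : b2 ≠ u ∧ b2 ≠ v := ⟨hb2u, hb2.ne'⟩
  have hx1 := hc.colorMissingAt_comap poleZ1.homI (x := b1) (poleZ1_mem_edgeSet_b1_x1 hb1')
    (by rw [poleZ1.homI_apply_of_ne hb1']; exact Sym2.mem_mk_left _ _)
    fun _ he => poleZ1.map_homI_ne he _ _
  have hy1 := hc.colorMissingAt_comap poleZ1.homI (x := b2) (poleZ1_mem_edgeSet_b2_y1 hb2')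
    (by rw [poleZ1.homI_apply_of_ne hb2']; exact Sym2.mem_mk_left _ _)
    fun _ he => poleZ1.map_homI_ne he _ _
  exact petersen_deleteIncidenceSet_missing_color_eq huv hb1 hb2 hb1u hb2u
    (hc.comap _ poleZ1.homI_injective) hx1 hy1

end PoleZ1

theorem poleZ1_uncolourable_general (u v a1 a2 b1 b2 x1 y1 x2 y2 : PetersenVert)
    (huv : petersen.Adj u v)
    (hb1 : petersen.Adj v b1) (hb2 : petersen.Adj v b2)
    (hb1u : b1 ≠ u) (hb2u : b2 ≠ u)
    (hf : petersen.Adj x2 y2) :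
    ¬ ThreeEdgeColorable (poleZ1 u v a1 a2 b1 b2 x1 y1 x2 y2) := by
  rintro ⟨c, hc⟩
  exact hc.poleZ1_connectors_ne hf _ _ (hc.poleZ1_connectors_eq huv hb1 hb2 hb1u hb2u)

/-- The junction `Z1 = I ∘ H` of the isochromatic 4-pole `I` with the heterochromatic
4-pole `H` admits no proper 3-edge-colouring. -/
theorem poleZ1_uncolourable (u v a1 a2 b1 b2 x1 y1 x2 y2 : PetersenVert)
    (huv : petersen.Adj u v)
    (ha1 : petersen.Adj u a1) (ha2 : petersen.Adj u a2)
    (ha12 : a1 ≠ a2) (ha1v : a1 ≠ v) (ha2v : a2 ≠ v)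
    (hb1 : petersen.Adj v b1) (hb2 : petersen.Adj v b2)
    (hb12 : b1 ≠ b2) (hb1u : b1 ≠ u) (hb2u : b2 ≠ u)
    (he : petersen.Adj x1 y1) (hf : petersen.Adj x2 y2)
    (h1 : x1 ≠ x2) (h2 : x1 ≠ y2) (h3 : y1 ≠ x2) (h4 : y1 ≠ y2) :
    ¬ ThreeEdgeColorable (poleZ1 u v a1 a2 b1 b2 x1 y1 x2 y2) :=
  poleZ1_uncolourable_general u v a1 a2 b1 b2 x1 y1 x2 y2 huv hb1 hb2 hb1u hb2u hf
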